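/- Let Q ⪰ 0 symmetric, R ≻ 0 symmetric, A_0 ≻ 0 symmetric. The Bellman fixed-point identity z^⊤ A_0 z = min_{u ∈ ℝ^d} [ z^⊤ Q z + u^⊤ R u + (z+u)^⊤ A_0 (z+u) ] holds for all z ∈ ℝ^d if and only if Q = A_0 (R + A_0)^{−1} A_0. -/

import Mathlib

/-!
With `S = R + A`, completing the square gives
`zᵀQz + uᵀRu + (z + u)ᵀA(z + u) = zᵀ(Q + A - A S⁻¹ A)z + (u + S⁻¹Az)ᵀ S (u + S⁻¹Az)`,
so for `S ≻ 0` the minimum over `u` is `zᵀ(Q + A - A S⁻¹ A)z`, attained at `u = -S⁻¹Az`.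
It equals `zᵀAz` for every `z` iff the symmetric matrices `Q` and `A S⁻¹ A` have the same
quadratic form, i.e. iff they are equal.
-/

open Matrix

namespace Matrix

variable {n α 𝕜 : Type*} [Fintype n]

theorem IsSymm.dotProduct_mulVec_comm [CommSemiring α] {M : Matrix n n α} (hM : M.IsSymm)
    (x y : n → α) : x ⬝ᵥ M *ᵥ y = y ⬝ᵥ M *ᵥ x := by
  rw [dotProduct_mulVec, ← mulVec_transpose, hM.eq, dotProduct_comm]

open scoped MatrixOrder ComplexOrder in
theorem IsHermitian.eq_of_forall_dotProduct_mulVec_eq [RCLike 𝕜] {A B : Matrix n n 𝕜}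
    (hA : A.IsHermitian) (hB : B.IsHermitian)
    (h : ∀ x, star x ⬝ᵥ A *ᵥ x = star x ⬝ᵥ B *ᵥ x) : A = B :=
  le_antisymm
    (PosSemidef.of_dotProduct_mulVec_nonneg (hB.sub hA) fun x => by
      simp [sub_mulVec, dotProduct_sub, h])
    (PosSemidef.of_dotProduct_mulVec_nonneg (hA.sub hB) fun x => by
      simp [sub_mulVec, dotProduct_sub, h])

end Matrix

section Bellman

variable {n α : Type*} [Fintype n]

/-- The right-hand side of the Bellman equation for the dynamics `z ↦ z + u` and the value
function `x ↦ xᵀAx`. -/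
def bellmanCost [CommRing α] (Q R A : Matrix n n α) (z u : n → α) : α :=
  z ⬝ᵥ Q *ᵥ z + u ⬝ᵥ R *ᵥ u + (z + u) ⬝ᵥ A *ᵥ (z + u)

theorem bellmanCost_eq_add_sq [DecidableEq n] [CommRing α] {Q R A : Matrix n n α} (hR : R.IsSymm)
    (hA : A.IsSymm) (hS : IsUnit (R + A)) (z u : n → α) :
    bellmanCost Q R A z u =
      z ⬝ᵥ (Q + A - A * (R + A)⁻¹ * A) *ᵥ z +
        (u + (R + A)⁻¹ *ᵥ A *ᵥ z) ⬝ᵥ (R + A) *ᵥ (u + (R + A)⁻¹ *ᵥ A *ᵥ z) := by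
  set S := R + A with hS_def
  set v := S⁻¹ *ᵥ A *ᵥ z
  have hSv : S *ᵥ v = A *ᵥ z := by
    rw [mulVec_mulVec, mul_nonsing_inv S ((isUnit_iff_isUnit_det S).mp hS), one_mulVec]
  have hvSv : z ⬝ᵥ (A * S⁻¹ * A) *ᵥ z = v ⬝ᵥ S *ᵥ v := by
    rw [← mulVec_mulVec, ← mulVec_mulVec, hSv, hA.dotProduct_mulVec_comm]
  have hvSu : v ⬝ᵥ S *ᵥ u = u ⬝ᵥ A *ᵥ z := by
    rw [(hR.add hA).dotProduct_mulVec_comm, hSv]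
  have hzAu : z ⬝ᵥ A *ᵥ u = u ⬝ᵥ A *ᵥ z := hA.dotProduct_mulVec_comm z u
  have huSu : u ⬝ᵥ S *ᵥ u = u ⬝ᵥ R *ᵥ u + u ⬝ᵥ A *ᵥ u := by
    rw [hS_def, add_mulVec, dotProduct_add]
  simp only [bellmanCost, add_mulVec, sub_mulVec, mulVec_add, dotProduct_add, add_dotProduct,
    dotProduct_sub]
  rw [hvSv, hSv, hvSu, huSu, hzAu]
  ring

theorem isLeast_bellmanCost [DecidableEq n] {Q R A : Matrix n n ℝ} (hR : R.IsSymm) (hA : A.IsSymm)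
    (hS : (R + A).PosDef) (z : n → ℝ) :
    IsLeast {y | ∃ u, y = bellmanCost Q R A z u} (z ⬝ᵥ (Q + A - A * (R + A)⁻¹ * A) *ᵥ z) := by
  simp only [bellmanCost_eq_add_sq hR hA hS.isUnit]
  refine ⟨⟨-((R + A)⁻¹ *ᵥ A *ᵥ z), by simp⟩, ?_⟩
  rintro y ⟨u, rfl⟩
  simpa using hS.posSemidef.dotProduct_mulVec_nonneg (u + (R + A)⁻¹ *ᵥ A *ᵥ z)

end Bellman

theorem stmt_10 {d : ℕ} (Q R A0 : Matrix (Fin d) (Fin d) ℝ)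
    (hQ : Q.PosSemidef) (hR : R.PosDef) (hA0 : A0.PosDef) :
    (∀ z : Fin d → ℝ,
        IsLeast {y : ℝ | ∃ u : Fin d → ℝ,
            y = z ⬝ᵥ Q *ᵥ z + u ⬝ᵥ R *ᵥ u + (z + u) ⬝ᵥ A0 *ᵥ (z + u)}
          (z ⬝ᵥ A0 *ᵥ z)) ↔ Q = A0 * (R + A0)⁻¹ * A0 := by
  have hS : (R + A0).PosDef := hR.add_posSemidef hA0.posSemidef
  have hA0_symm : A0.IsSymm := isHermitian_iff_isSymm.mp hA0.isHermitian
  have hM : (A0 * (R + A0)⁻¹ * A0).IsHermitian := by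
    simpa [hA0_symm.eq] using isHermitian_conjTranspose_mul_mul A0 hS.inv.isHermitian
  have hmin := isLeast_bellmanCost (Q := Q) (isHermitian_iff_isSymm.mp hR.isHermitian)
    hA0_symm hS
  simp only [add_mulVec, sub_mulVec, dotProduct_add, dotProduct_sub] at hmin
  change (∀ z, IsLeast {y | ∃ u, y = bellmanCost Q R A0 z u} (z ⬝ᵥ A0 *ᵥ z)) ↔ _
  calc (∀ z, IsLeast _ (z ⬝ᵥ A0 *ᵥ z))
      ↔ ∀ z : Fin d → ℝ, z ⬝ᵥ Q *ᵥ z = z ⬝ᵥ (A0 * (R + A0)⁻¹ * A0) *ᵥ z :=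
        forall_congr' fun z =>
          ⟨fun h => by linarith [h.unique (hmin z)], fun h => by convert hmin z using 1; linarith⟩
    _ ↔ Q = A0 * (R + A0)⁻¹ * A0 :=
        ⟨fun h => hQ.isHermitian.eq_of_forall_dotProduct_mulVec_eq hM (by simpa using h),
          fun h z => by rw [h]⟩
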